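/- Fix β > 0. For every K ∈ ℝⁿ and every (φ, λ, t) ∈ ℝⁿ × ℝ × [0,1) with H_K(φ, λ, t) = 0, one has φᵀφ = 1/h and |λ| ≤ max_i |K_i| + ρ(D) + β/h, where ρ(D) denotes the maximum of |μ| over all eigenvalues μ of D. In particular every connected component of the zero set of H_K in ℝⁿ × ℝ × [0,1) is bounded. -/

import Mathlib

/-!
Pairing the first component of `H_K(φ, λ, t) = 0` with `φ` gives
`λ ‖φ‖² = (1 - t) ∑ Kᵢ φᵢ² + φᵀ D φ + t β ∑ φᵢ⁴`, while the second component fixes `‖φ‖² = 1/h`.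
The three terms are at most `max |Kᵢ| ‖φ‖²`, `ρ(D) ‖φ‖²` (expand `φ` in an orthonormal eigenbasis
of the symmetric matrix `D`) and `β ‖φ‖⁴`; dividing by `‖φ‖²` bounds `λ`. Hence the whole zero set,
and a fortiori each of its connected components, is bounded.
-/

/-- The 1D homotopy map H_K(φ, λ, t). -/
noncomputable def homotopy1D {n : ℕ} (h β : ℝ) (D : Matrix (Fin n) (Fin n) ℝ)
    (K : Fin n → ℝ) (p : (Fin n → ℝ) × ℝ × ℝ) : (Fin n → ℝ) × ℝ :=
  ((1 - p.2.2) • (fun i => K i * p.1 i) + D.mulVec p.1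
      + (p.2.2 * β) • (fun i => p.1 i ^ 3) - p.2.1 • p.1,
    (1 / 2) * (1 / h - ∑ i, p.1 i ^ 2))

open Matrix Module.End

theorem LinearMap.IsSymmetric.abs_inner_apply_self_le {E : Type*} [NormedAddCommGroup E]
    [InnerProductSpace ℝ E] [FiniteDimensional ℝ E] {T : E →ₗ[ℝ] E} (hT : T.IsSymmetric)
    {ρ : ℝ} (hρ : ∀ μ, HasEigenvalue T μ → |μ| ≤ ρ) (x : E) :
    |inner ℝ (T x) x| ≤ ρ * ‖x‖ ^ 2 := by
  set b := hT.eigenvectorBasis rfl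
  set μ := hT.eigenvalues rfl
  set r := b.repr x
  have hTx : inner ℝ (T x) x = ∑ i, μ i * r i ^ 2 := by
    rw [← b.repr.inner_map_map, PiLp.inner_apply]
    refine Finset.sum_congr rfl fun i _ => ?_
    simp only [hT.eigenvectorBasis_apply_self_apply, RCLike.inner_apply, conj_trivial,
      RCLike.ofReal_real_eq_id, id_eq, r, μ, b]
    ring
  have hx : ‖x‖ ^ 2 = ∑ i, r i ^ 2 := by
    rw [← b.repr.norm_map, EuclideanSpace.norm_sq_eq]
    simp only [Real.norm_eq_abs, sq_abs, r]
  rw [hTx, hx, Finset.mul_sum]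
  refine (Finset.abs_sum_le_sum_abs _ _).trans (Finset.sum_le_sum fun i _ => ?_)
  rw [abs_mul, abs_sq]
  exact mul_le_mul_of_nonneg_right (hρ _ (hT.hasEigenvalue_eigenvalues rfl i)) (sq_nonneg _)

theorem Matrix.IsHermitian.abs_dotProduct_mulVec_self_le {ι : Type*} [Fintype ι] [DecidableEq ι]
    {D : Matrix ι ι ℝ} (hD : D.IsHermitian) {ρ : ℝ}
    (hρ : ∀ μ : ℝ, (∃ y : ι → ℝ, y ≠ 0 ∧ D *ᵥ y = μ • y) → |μ| ≤ ρ) (x : ι → ℝ) :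
    |x ⬝ᵥ D *ᵥ x| ≤ ρ * (x ⬝ᵥ x) := by
  have hρ' : ∀ μ, HasEigenvalue (toEuclideanLin D) μ → |μ| ≤ ρ := by
    intro μ hμ
    obtain ⟨y, hy⟩ := hμ.exists_hasEigenvector
    refine hρ μ ⟨WithLp.ofLp y, by simpa using hy.2, ?_⟩
    simpa using congrArg WithLp.ofLp hy.apply_eq_smul
  have := (isSymmetric_toEuclideanLin_iff.mpr hD).abs_inner_apply_self_le hρ' (WithLp.toLp 2 x)
  rwa [← real_inner_self_eq_norm_sq, real_inner_comm, toLpLin_toLp, toLin'_apply,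
    EuclideanSpace.inner_toLp_toLp, EuclideanSpace.inner_toLp_toLp, star_trivial, dotProduct_comm] at this

theorem Matrix.isHermitian_of_tridiagonal {n : ℕ} {D : Matrix (Fin n) (Fin n) ℝ} {c : ℝ}
    (hoff : ∀ i j : Fin n, |(i : ℤ) - j| = 1 → D i j = c)
    (hzero : ∀ i j : Fin n, 2 ≤ |(i : ℤ) - j| → D i j = 0) : D.IsHermitian := by
  ext i j
  rw [conjTranspose_apply, star_trivial]
  have hdist : |(j : ℤ) - i| = |(i : ℤ) - j| := abs_sub_comm _ _
  obtain hij | hij | hij : |(i : ℤ) - j| = 0 ∨ |(i : ℤ) - j| = 1 ∨ 2 ≤ |(i : ℤ) - j| := by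
    have := abs_nonneg ((i : ℤ) - j); omega
  · rw [Fin.ext (by have := abs_eq_zero.mp hij; omega : (i : ℕ) = j)]
  · rw [hoff i j hij, hoff j i (hdist ▸ hij)]
  · rw [hzero i j hij, hzero j i (hdist ▸ hij)]

def homotopyZeroSet {n : ℕ} (h β : ℝ) (D : Matrix (Fin n) (Fin n) ℝ) (K : Fin n → ℝ) :
    Set ((Fin n → ℝ) × ℝ × ℝ) :=
  {q | 0 ≤ q.2.2 ∧ q.2.2 < 1 ∧ homotopy1D h β D K q = 0}

section Homotopy

variable {n : ℕ} {h β : ℝ} {D : Matrix (Fin n) (Fin n) ℝ} {K φ : Fin n → ℝ} {lam t : ℝ}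

theorem homotopy1D_eq_zero_iff :
    homotopy1D h β D K (φ, lam, t) = 0 ↔
      (∀ i, (1 - t) * (K i * φ i) + (D *ᵥ φ) i + t * β * φ i ^ 3 = lam * φ i) ∧
        ∑ i, φ i ^ 2 = 1 / h := by
  simp [homotopy1D, Prod.ext_iff, funext_iff, sub_eq_zero, eq_comm (a := h⁻¹)]

theorem mul_sum_sq_eq_of_forall_eq_mul
    (heq : ∀ i, (1 - t) * (K i * φ i) + (D *ᵥ φ) i + t * β * φ i ^ 3 = lam * φ i) :
    lam * ∑ i, φ i ^ 2 =
      (1 - t) * ∑ i, K i * φ i ^ 2 + φ ⬝ᵥ D *ᵥ φ + t * β * ∑ i, φ i ^ 4 := by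
  simp only [dotProduct, Finset.mul_sum, ← Finset.sum_add_distrib]
  exact Finset.sum_congr rfl fun i _ => by linear_combination -(φ i * heq i)

theorem abs_le_of_forall_eq_mul {M ρ : ℝ} (hK : ∀ i, |K i| ≤ M) (hD : D.IsHermitian)
    (hρ : ∀ μ : ℝ, (∃ y : Fin n → ℝ, y ≠ 0 ∧ D *ᵥ y = μ • y) → |μ| ≤ ρ)
    (ht₀ : 0 ≤ t) (ht₁ : t ≤ 1) (hβ : 0 ≤ β) (hφ : 0 < ∑ i, φ i ^ 2)
    (heq : ∀ i, (1 - t) * (K i * φ i) + (D *ᵥ φ) i + t * β * φ i ^ 3 = lam * φ i) :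
    |lam| ≤ M + ρ + β * ∑ i, φ i ^ 2 := by
  set s := ∑ i, φ i ^ 2
  have hpot : |(1 - t) * ∑ i, K i * φ i ^ 2| ≤ M * s := by
    rw [abs_mul, abs_of_nonneg (by linarith)]
    refine (mul_le_of_le_one_left (abs_nonneg _) (by linarith)).trans ?_
    rw [Finset.mul_sum]
    refine (Finset.abs_sum_le_sum_abs _ _).trans (Finset.sum_le_sum fun i _ => ?_)
    rw [abs_mul, abs_sq]
    exact mul_le_mul_of_nonneg_right (hK i) (sq_nonneg _)
  have hkin : |φ ⬝ᵥ D *ᵥ φ| ≤ ρ * s := by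
    simpa only [dotProduct, ← sq] using hD.abs_dotProduct_mulVec_self_le hρ φ
  have hquart : |t * β * ∑ i, φ i ^ 4| ≤ β * s ^ 2 := by
    have : ∑ i, φ i ^ 4 ≤ s ^ 2 := by
      simpa only [← pow_mul] using
        Finset.sum_sq_le_sq_sum_of_nonneg (fun i _ => sq_nonneg (φ i))
    rw [abs_of_nonneg (by positivity)]
    calc t * β * ∑ i, φ i ^ 4 ≤ 1 * β * s ^ 2 := by gcongr
      _ = β * s ^ 2 := by ring
  have hlam : |lam| * s ≤ (M + ρ + β * s) * s := calc
    |lam| * s = |(1 - t) * ∑ i, K i * φ i ^ 2 + φ ⬝ᵥ D *ᵥ φ + t * β * ∑ i, φ i ^ 4| := by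
      rw [← mul_sum_sq_eq_of_forall_eq_mul heq, abs_mul, abs_of_pos hφ]
    _ ≤ M * s + ρ * s + β * s ^ 2 := (abs_add_three _ _ _).trans (by gcongr)
    _ = (M + ρ + β * s) * s := by ring
  exact le_of_mul_le_mul_right hlam hφ

theorem abs_le_of_homotopy1D_eq_zero (hh : 0 < h) (hβ : 0 ≤ β) (hD : D.IsHermitian) {ρ : ℝ}
    (hρ : ∀ μ : ℝ, (∃ y : Fin n → ℝ, y ≠ 0 ∧ D *ᵥ y = μ • y) → |μ| ≤ ρ)
    (ht₀ : 0 ≤ t) (ht₁ : t ≤ 1)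
    (hzero : homotopy1D h β D K (φ, lam, t) = 0) : |lam| ≤ (⨆ i, |K i|) + ρ + β / h := by
  obtain ⟨heq, hnorm⟩ := homotopy1D_eq_zero_iff.mp hzero
  have hK : ∀ i, |K i| ≤ ⨆ i, |K i| := le_ciSup (Set.finite_range _).bddAbove
  simpa only [hnorm, mul_one_div] using
    abs_le_of_forall_eq_mul hK hD hρ ht₀ ht₁ hβ (hnorm ▸ one_div_pos.mpr hh) heq

theorem isBounded_homotopyZeroSet (hh : 0 < h) (hβ : 0 ≤ β) (hD : D.IsHermitian) {ρ : ℝ}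
    (hρ : ∀ μ : ℝ, (∃ y : Fin n → ℝ, y ≠ 0 ∧ D *ᵥ y = μ • y) → |μ| ≤ ρ) :
    Bornology.IsBounded (homotopyZeroSet h β D K) := by
  refine ((Metric.isBounded_closedBall (x := 0) (r := √(1 / h))).prod
    ((Metric.isBounded_closedBall (x := 0) (r := (⨆ i, |K i|) + ρ + β / h)).prod
      (Metric.isBounded_Icc (0 : ℝ) 1))).subset ?_
  rintro ⟨φ, lam, t⟩ ⟨ht₀, ht₁, hzero⟩
  have hnorm := (homotopy1D_eq_zero_iff.mp hzero).2
  refine ⟨?_, ?_, ht₀, ht₁.le⟩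
  · rw [mem_closedBall_zero_iff, pi_norm_le_iff_of_nonneg (Real.sqrt_nonneg _)]
    exact fun i => Real.abs_le_sqrt <|
      hnorm ▸ Finset.single_le_sum (fun j _ => sq_nonneg (φ j)) (Finset.mem_univ i)
  · rw [mem_closedBall_zero_iff, Real.norm_eq_abs]
    exact abs_le_of_homotopy1D_eq_zero hh hβ hD hρ ht₀ ht₁.le hzero

end Homotopy

theorem stmt_12 (n : ℕ) (h : ℝ) (hh : 0 < h)
    (D : Matrix (Fin n) (Fin n) ℝ)
    (hDoff : ∀ i j : Fin n, |(i : ℤ) - (j : ℤ)| = 1 → D i j = -(1 / (2 * h ^ 2)))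
    (hDzero : ∀ i j : Fin n, 2 ≤ |(i : ℤ) - (j : ℤ)| → D i j = 0)
    (β : ℝ) (hβ : 0 < β)
    (ρD : ℝ)
    (hρD : IsGreatest { r : ℝ | ∃ μ : ℝ,
      (∃ y : Fin n → ℝ, y ≠ 0 ∧ D.mulVec y = μ • y) ∧ r = |μ| } ρD)
    (K : Fin n → ℝ) :
    (∀ (φ : Fin n → ℝ) (lam t : ℝ), 0 ≤ t → t < 1 →
      homotopy1D h β D K (φ, lam, t) = 0 →
        (∑ i, φ i ^ 2) = 1 / h ∧
        |lam| ≤ (⨆ i, |K i|) + ρD + β / h) ∧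
    (∀ p : (Fin n → ℝ) × ℝ × ℝ,
      p ∈ {q : (Fin n → ℝ) × ℝ × ℝ | 0 ≤ q.2.2 ∧ q.2.2 < 1 ∧ homotopy1D h β D K q = 0} →
      Bornology.IsBounded (connectedComponentIn
        {q : (Fin n → ℝ) × ℝ × ℝ | 0 ≤ q.2.2 ∧ q.2.2 < 1 ∧ homotopy1D h β D K q = 0} p)) := by
  have hD : D.IsHermitian := isHermitian_of_tridiagonal hDoff hDzero
  have hρ : ∀ μ : ℝ, (∃ y : Fin n → ℝ, y ≠ 0 ∧ D *ᵥ y = μ • y) → |μ| ≤ ρD :=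
    fun μ hμ => hρD.2 ⟨μ, hμ, rfl⟩
  refine ⟨fun φ lam t ht₀ ht₁ hzero => ⟨(homotopy1D_eq_zero_iff.mp hzero).2, ?_⟩, fun p _ => ?_⟩
  · exact abs_le_of_homotopy1D_eq_zero hh hβ.le hD hρ ht₀ ht₁.le hzero
  · exact (isBounded_homotopyZeroSet hh hβ.le hD hρ).subset (connectedComponentIn_subset _ _)
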